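/- arXiv:1509.04408 — 2 statements merged into one kernel-verified Lean document; each statement's English description precedes it below -/
import Mathlib

section
/- Let ψ(q) = #{(m,n): m ≥ n ≥ 0, C(m,n) odd, m + 2n = q}. Then for every positive integer q and k ≥ 2, ψ(2^k q − 1) = ψ(2^{k−1} q − 1) + ψ(2^{k−2} q − 1). -/
open Nat

def S (q : ℤ) : Set (ℕ × ℕ) :=
  {mn : ℕ × ℕ | mn.2 ≤ mn.1 ∧ (mn.1 : ℤ) + 2 * (mn.2 : ℤ) = q ∧
    ¬ 2 ∣ Nat.choose mn.1 mn.2}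

lemma S_finite (q : ℤ) : (S q).Finite := by
  apply Set.Finite.subset ((Set.finite_Iic q.toNat).prod (Set.finite_Iic q.toNat))
  rintro ⟨m, n⟩ ⟨h1, h2, h3⟩
  simp only [Set.mem_prod, Set.mem_Iic]
  omega

lemma choose_odd_iff (m n : ℕ) :
    ¬ 2 ∣ Nat.choose m n ↔
      (¬ 2 ∣ Nat.choose (m % 2) (n % 2)) ∧ ¬ 2 ∣ Nat.choose (m / 2) (n / 2) := by
  have h : Nat.choose m n ≡ Nat.choose (m % 2) (n % 2) * Nat.choose (m / 2) (n / 2) [MOD 2] :=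
    @Choose.choose_modEq_choose_mod_mul_choose_div_nat m n 2 ⟨Nat.prime_two⟩
  rw [(Nat.ModEq.dvd_iff h (dvd_refl 2)), Nat.prime_two.dvd_mul]
  tauto

lemma odd_dd (a b : ℕ) : ¬ 2 ∣ Nat.choose (2*a) (2*b) ↔ ¬ 2 ∣ Nat.choose a b := by
  rw [choose_odd_iff]
  have h1 : (2*a) % 2 = 0 := by omega
  have h2 : (2*b) % 2 = 0 := by omega
  have h3 : (2*a) / 2 = a := by omega
  have h4 : (2*b) / 2 = b := by omega
  simp [h1, h2, h3, h4]

lemma odd_od (a b : ℕ) : ¬ 2 ∣ Nat.choose (2*a+1) (2*b) ↔ ¬ 2 ∣ Nat.choose a b := by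
  rw [choose_odd_iff]
  have h1 : (2*a+1) % 2 = 1 := by omega
  have h2 : (2*b) % 2 = 0 := by omega
  have h3 : (2*a+1) / 2 = a := by omega
  have h4 : (2*b) / 2 = b := by omega
  simp [h1, h2, h3, h4]

lemma odd_oo (a b : ℕ) : ¬ 2 ∣ Nat.choose (2*a+1) (2*b+1) ↔ ¬ 2 ∣ Nat.choose a b := by
  rw [choose_odd_iff]
  have h1 : (2*a+1) % 2 = 1 := by omega
  have h2 : (2*b+1) % 2 = 1 := by omega
  have h3 : (2*a+1) / 2 = a := by omega
  have h4 : (2*b+1) / 2 = b := by omega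
  simp [h1, h2, h3, h4]

lemma even_do (a b : ℕ) : 2 ∣ Nat.choose (2*a) (2*b+1) := by
  by_contra h
  rw [choose_odd_iff] at h
  have h1 : (2*a) % 2 = 0 := by omega
  have h2 : (2*b+1) % 2 = 1 := by omega
  simp [h1, h2] at h

/-- `ψ(q)`: number of `(m,n)` with `m ≥ n ≥ 0`, `C(m,n)` odd and `m + 2n = q`
(extended by `0` to negative `q`). -/
noncomputable def psi (q : ℤ) : ℕ :=
  {mn : ℕ × ℕ | mn.2 ≤ mn.1 ∧ (mn.1 : ℤ) + 2 * (mn.2 : ℤ) = q ∧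
    ¬ 2 ∣ Nat.choose mn.1 mn.2}.ncard

lemma psi_eq (q : ℤ) : psi q = (S q).ncard := rfl

lemma lemA (r : ℕ) : psi ((2*r : ℕ) : ℤ) = psi (r : ℤ) := by
  rw [psi_eq, psi_eq]
  have himg : S ((2*r : ℕ) : ℤ) = (fun p : ℕ × ℕ => (2*p.1, 2*p.2)) '' S (r : ℤ) := by
    ext mn
    constructor
    · rintro ⟨h1, h2, h3⟩
      obtain ⟨m, n⟩ := mn
      have hsum : m + 2 * n = 2 * r := by exact_mod_cast h2
      -- m even
      obtain ⟨a, ha⟩ : ∃ a, m = 2*a := ⟨m/2, by omega⟩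
      -- n even (else choose even)
      have hn : n % 2 = 0 := by
        by_contra hodd
        obtain ⟨b, hb⟩ : ∃ b, n = 2*b+1 := ⟨n/2, by omega⟩
        exact h3 (ha ▸ hb ▸ even_do a b)
      obtain ⟨b, hb⟩ : ∃ b, n = 2*b := ⟨n/2, by omega⟩
      refine ⟨(a, b), ⟨by omega, by push_cast at h2 ⊢; omega, ?_⟩, by simp [ha, hb]⟩
      rw [← odd_dd, ← ha, ← hb]; exact h3
    · rintro ⟨⟨a, b⟩, ⟨h1, h2, h3⟩, rfl⟩
      have hsum : (a : ℤ) + 2 * b = r := h2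
      exact ⟨by simpa using Nat.mul_le_mul_left 2 h1, by push_cast; omega,
        (odd_dd a b).mpr h3⟩
  rw [himg, Set.ncard_image_of_injective _ (by intro p q h; simp at h; ext <;> omega)]

lemma lemB (r : ℕ) (hr : 1 ≤ r) :
    psi ((2*r+1 : ℕ) : ℤ) = psi (r : ℤ) + psi ((r-1 : ℕ) : ℤ) := by
  rw [psi_eq, psi_eq, psi_eq]
  set f1 : ℕ × ℕ → ℕ × ℕ := fun p => (2*p.1+1, 2*p.2) with hf1
  set f2 : ℕ × ℕ → ℕ × ℕ := fun p => (2*p.1+1, 2*p.2+1) with hf2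
  have himg : S ((2*r+1 : ℕ) : ℤ) = f1 '' S (r : ℤ) ∪ f2 '' S ((r-1 : ℕ) : ℤ) := by
    ext mn
    constructor
    · rintro ⟨h1, h2, h3⟩
      obtain ⟨m, n⟩ := mn
      have hsum : m + 2 * n = 2 * r + 1 := by exact_mod_cast h2
      obtain ⟨a, ha⟩ : ∃ a, m = 2*a+1 := ⟨m/2, by omega⟩
      rcases Nat.even_or_odd n with ⟨b, hb⟩ | ⟨b, hb⟩
      · left
        refine ⟨(a, b), ⟨by omega, by push_cast; omega, ?_⟩, by simp [hf1, ha]; omega⟩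
        rw [← odd_od, ← ha, (by omega : 2*b = n)]; exact h3
      · right
        refine ⟨(a, b), ⟨by omega, by push_cast; omega, ?_⟩, by simp [hf2, ha]; omega⟩
        rw [← odd_oo, ← ha, (by omega : 2*b+1 = n)]; exact h3
    · rintro (⟨⟨a, b⟩, ⟨h1, h2, h3⟩, rfl⟩ | ⟨⟨a, b⟩, ⟨h1, h2, h3⟩, rfl⟩)
      · have hsum : (a : ℤ) + 2 * b = r := h2
        refine ⟨by simp [hf1]; omega, by simp [hf1]; omega, ?_⟩
        simpa [hf1] using (odd_od a b).mpr h3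
      · have hsum : (a : ℤ) + 2 * b = ((r-1 : ℕ) : ℤ) := h2
        have hr1 : ((r-1 : ℕ) : ℤ) = (r : ℤ) - 1 := by omega
        refine ⟨by simp [hf2]; omega, by simp [hf2]; push_cast [hr1] at hsum; omega, ?_⟩
        simpa [hf2] using (odd_oo a b).mpr h3
  rw [himg, Set.ncard_union_eq ?_ ((S_finite _).image _) ((S_finite _).image _),
    Set.ncard_image_of_injective _ (by intro p q h; simp [hf1] at h; ext <;> omega),
    Set.ncard_image_of_injective _ (by intro p q h; simp [hf2] at h; ext <;> omega)]
  · rw [Set.disjoint_left]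
    rintro mn ⟨⟨a, b⟩, _, rfl⟩ ⟨⟨c, d⟩, _, h⟩
    simp [hf1, hf2] at h
    omega

theorem psi_fib_rec (q : ℕ) (hq : 0 < q) (k : ℕ) (hk : 2 ≤ k) :
    psi ((2 : ℤ) ^ k * q - 1) =
      psi ((2 : ℤ) ^ (k - 1) * q - 1) + psi ((2 : ℤ) ^ (k - 2) * q - 1) := by
  obtain ⟨N, hNdef⟩ : ∃ N, 2 ^ (k - 2) * q = N := ⟨_, rfl⟩
  have hN : 1 ≤ N := by rw [← hNdef]; exact Nat.one_le_iff_ne_zero.mpr (by positivity)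
  have hk1 : 2 ^ k = 2 ^ (k - 2) * 4 := by
    have h := pow_add 2 (k - 2) 2
    rw [show k - 2 + 2 = k from by omega] at h
    simpa using h
  have hk2 : 2 ^ (k - 1) = 2 ^ (k - 2) * 2 := by
    have h := pow_add 2 (k - 2) 1
    rw [show k - 2 + 1 = k - 1 from by omega] at h
    simpa using h
  have hC : 2 ^ k * q = 4 * N := by rw [hk1, ← hNdef]; ring
  have hB : 2 ^ (k - 1) * q = 2 * N := by rw [hk2, ← hNdef]; ring
  have hCz : (2 : ℤ) ^ k * q = ((4 * N : ℕ) : ℤ) := by exact_mod_cast hC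
  have hBz : (2 : ℤ) ^ (k - 1) * q = ((2 * N : ℕ) : ℤ) := by exact_mod_cast hB
  have hNz : (2 : ℤ) ^ (k - 2) * q = ((N : ℕ) : ℤ) := by exact_mod_cast hNdef
  obtain ⟨r, hrdef⟩ : ∃ r, 2 * N - 1 = r := ⟨_, rfl⟩
  have hrge : 1 ≤ r := by omega
  have e1 : (2 : ℤ) ^ k * q - 1 = ((2 * r + 1 : ℕ) : ℤ) := by rw [hCz]; push_cast; omega
  have e2 : (2 : ℤ) ^ (k - 1) * q - 1 = ((r : ℕ) : ℤ) := by rw [hBz]; push_cast; omega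
  have e3 : (2 : ℤ) ^ (k - 2) * q - 1 = ((N - 1 : ℕ) : ℤ) := by rw [hNz]; omega
  have e4 : r - 1 = 2 * (N - 1) := by omega
  rw [e1, e2, e3, lemB r hrge, e4, lemA]
end

section
/- Let ψ(q) = #{(m,n): m ≥ n ≥ 0, C(m,n) odd, m + 2n = q}, γ₊ = (1+√5)/2, γ₋ = (1−√5)/2. Then for every positive integer q and nonnegative integer k, ψ(2^k q − 1) = [ (γ₊^{k+1} − γ₋^{k+1}) ψ(q−1) + (γ₊^k − γ₋^k) ψ(q−2) ] / (γ₊ − γ₋). -/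
noncomputable def gammaP : ℝ := (1 + Real.sqrt 5) / 2
noncomputable def gammaM : ℝ := (1 - Real.sqrt 5) / 2

open Nat

theorem Choose.choose_mul_add_mul_add_modEq_nat {p a b r c : ℕ} [Fact p.Prime] (hr : r < p)
    (hc : c < p) : choose (p * a + r) (p * b + c) ≡ choose r c * choose a b [MOD p] := by
  have hp : 0 < p := (Fact.out : p.Prime).pos
  simpa [Nat.mul_add_mod, Nat.mod_eq_of_lt, hr, hc, Nat.mul_add_div hp, Nat.div_eq_of_lt] using
    Choose.choose_modEq_choose_mod_mul_choose_div_nat (n := p * a + r) (k := p * b + c) (p := p)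

theorem two_dvd_choose_two_mul_add_iff {a b r c : ℕ} (hr : r < 2) (hc : c < 2) :
    2 ∣ choose (2 * a + r) (2 * b + c) ↔ 2 ∣ choose r c * choose a b :=
  (Choose.choose_mul_add_mul_add_modEq_nat hr hc).dvd_iff dvd_rfl

def psiSet (q : ℤ) : Set (ℕ × ℕ) :=
  {mn : ℕ × ℕ | mn.2 ≤ mn.1 ∧ (mn.1 : ℤ) + 2 * (mn.2 : ℤ) = q ∧ ¬ 2 ∣ Nat.choose mn.1 mn.2}

theorem psi_eq_ncard_psiSet (q : ℤ) : psi q = (psiSet q).ncard := rfl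

theorem psiSet_finite (q : ℤ) : (psiSet q).Finite :=
  ((Set.finite_Iic q.toNat).prod (Set.finite_Iic q.toNat)).subset fun _ ⟨_, hsum, _⟩ => by
    simp only [Set.mem_prod, Set.mem_Iic]; omega

def bitPair (r c : ℕ) (x : ℕ × ℕ) : ℕ × ℕ := (2 * x.1 + r, 2 * x.2 + c)

theorem exists_eq_bitPair (p : ℕ × ℕ) : ∃ r < 2, ∃ c < 2, ∃ x, p = bitPair r c x :=
  ⟨p.1 % 2, p.1.mod_lt two_pos, p.2 % 2, p.2.mod_lt two_pos, (p.1 / 2, p.2 / 2), by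
    simp only [bitPair, Nat.div_add_mod]⟩

theorem bitPair_injective (r c : ℕ) : Function.Injective (bitPair r c) := fun x y h => by
  simp only [bitPair, Prod.ext_iff] at h ⊢; omega

theorem bitPair_inj {r c r' c' : ℕ} {x x' : ℕ × ℕ} (hr : r < 2) (hc : c < 2) (hr' : r' < 2)
    (hc' : c' < 2) : bitPair r c x = bitPair r' c' x' ↔ r = r' ∧ c = c' ∧ x = x' := by
  simp only [bitPair, Prod.ext_iff]; omega

theorem bitPair_mem_image_bitPair_iff {r c r' c' : ℕ} (hr : r < 2) (hc : c < 2) (hr' : r' < 2)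
    (hc' : c' < 2) (x : ℕ × ℕ) (s : Set (ℕ × ℕ)) :
    bitPair r c x ∈ bitPair r' c' '' s ↔ r = r' ∧ c = c' ∧ x ∈ s := by
  simp only [Set.mem_image, bitPair_inj hr' hc' hr hc]
  constructor
  · rintro ⟨x', hx', rfl, rfl, rfl⟩
    exact ⟨rfl, rfl, hx'⟩
  · rintro ⟨rfl, rfl, hx⟩
    exact ⟨x, hx, rfl, rfl, rfl⟩

-- The division is exact because of the congruence `q ≡ r [ZMOD 2]`.
theorem bitPair_mem_psiSet_iff {r c : ℕ} (hr : r < 2) (hc : c < 2) (a b : ℕ) (q : ℤ) :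
    bitPair r c (a, b) ∈ psiSet q ↔
      (a, b) ∈ psiSet ((q - r - 2 * c) / 2) ∧ q ≡ r [ZMOD 2] ∧ c ≤ r := by
  simp only [bitPair, psiSet, Set.mem_ofPred_eq, two_dvd_choose_two_mul_add_iff hr hc, Int.ModEq]
  interval_cases r <;> interval_cases c <;> simp <;> omega

theorem psiSet_two_mul_sub_one (q : ℤ) :
    psiSet (2 * q - 1) = bitPair 1 0 '' psiSet (q - 1) ∪ bitPair 1 1 '' psiSet (q - 2) := by
  ext p
  obtain ⟨r, hr, c, hc, ⟨a, b⟩, rfl⟩ := exists_eq_bitPair p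
  rw [Set.mem_union, bitPair_mem_psiSet_iff hr hc,
    bitPair_mem_image_bitPair_iff hr hc (by norm_num) (by norm_num),
    bitPair_mem_image_bitPair_iff hr hc (by norm_num) (by norm_num)]
  interval_cases r <;> interval_cases c <;> simp [Int.ModEq]
  all_goals congr! 2; omega

theorem psiSet_two_mul (q : ℤ) : psiSet (2 * q) = bitPair 0 0 '' psiSet q := by
  ext p
  obtain ⟨r, hr, c, hc, ⟨a, b⟩, rfl⟩ := exists_eq_bitPair p
  rw [bitPair_mem_psiSet_iff hr hc, bitPair_mem_image_bitPair_iff hr hc (by norm_num) (by norm_num)]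
  interval_cases r <;> interval_cases c <;> simp [Int.ModEq]

theorem psi_two_mul_sub_one (q : ℤ) : psi (2 * q - 1) = psi (q - 1) + psi (q - 2) := by
  have hdisj : Disjoint (bitPair 1 0 '' psiSet (q - 1)) (bitPair 1 1 '' psiSet (q - 2)) :=
    Set.disjoint_image_image fun x _ y _ h => by simp only [bitPair, Prod.ext_iff] at h; omega
  rw [psi_eq_ncard_psiSet, psiSet_two_mul_sub_one,
    Set.ncard_union_eq hdisj ((psiSet_finite _).image _) ((psiSet_finite _).image _),
    Set.ncard_image_of_injective _ (bitPair_injective 1 0),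
    Set.ncard_image_of_injective _ (bitPair_injective 1 1), psi_eq_ncard_psiSet,
    psi_eq_ncard_psiSet]

theorem psi_two_mul (q : ℤ) : psi (2 * q) = psi q := by
  rw [psi_eq_ncard_psiSet, psiSet_two_mul, Set.ncard_image_of_injective _ (bitPair_injective 0 0),
    psi_eq_ncard_psiSet]

theorem psi_two_pow_mul_sub_one (q : ℤ) (k : ℕ) :
    psi (2 ^ k * q - 1) = fib (k + 1) * psi (q - 1) + fib k * psi (q - 2) := by
  induction k using Nat.twoStepInduction with
  | zero => simp
  | one => simp [psi_two_mul_sub_one]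
  | more k ih ih' =>
    rw [show 2 ^ (k + 2) * q - 1 = 2 * (2 ^ (k + 1) * q) - 1 by ring, psi_two_mul_sub_one,
      show 2 ^ (k + 1) * q - 2 = 2 * (2 ^ k * q - 1) by ring, psi_two_mul, ih, ih',
      fib_add_two (n := k + 1), fib_add_two (n := k)]
    ring

theorem psi_closed_form_general (q : ℕ) (k : ℕ) :
    (psi ((2 : ℤ) ^ k * q - 1) : ℝ) =
      ((gammaP ^ (k + 1) - gammaM ^ (k + 1)) * (psi ((q : ℤ) - 1) : ℝ)
        + (gammaP ^ k - gammaM ^ k) * (psi ((q : ℤ) - 2) : ℝ)) / (gammaP - gammaM) := by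
  have hP : gammaP = Real.goldenRatio := rfl
  have hM : gammaM = Real.goldenConj := rfl
  rw [psi_two_pow_mul_sub_one, hP, hM, Real.goldenRatio_sub_goldenConj]
  push_cast
  rw [Real.coe_fib_eq, Real.coe_fib_eq]
  ring

theorem psi_closed_form (q : ℕ) (hq : 0 < q) (k : ℕ) :
    (psi ((2 : ℤ) ^ k * q - 1) : ℝ) =
      ((gammaP ^ (k + 1) - gammaM ^ (k + 1)) * (psi ((q : ℤ) - 1) : ℝ)
        + (gammaP ^ k - gammaM ^ k) * (psi ((q : ℤ) - 2) : ℝ)) / (gammaP - gammaM) :=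
  psi_closed_form_general q k
end
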